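/- arXiv:1212.5324 — 2 statements merged into one kernel-verified Lean document; each statement's English description precedes it below -/
import Mathlib

section
/- Let c ≥ 0 be a real number and k ≥ 1 an integer. Then there exist polynomials u₀, u₁ ∈ ℝ[X], each a sum of squares of polynomials, with deg(u₀) ≤ k and deg(u₁·(X−c)) ≤ k, such that X^k − c^k = u₀ + u₁·(X − c). -/
/-!
Since `X ^ 2 - c ^ 2 = (X - c) ^ 2 + 2 c (X - c)`, the identity
`X ^ (n + 2) - c ^ (n + 2) = X ^ 2 (X ^ n - c ^ n) + c ^ n ((X - c) ^ 2 + 2 c (X - c))`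
turns a certificate for `X ^ n ≥ c ^ n` into one for `X ^ (n + 2) ≥ c ^ (n + 2)`: multiplying
by the square `X ^ 2` keeps the multipliers sums of squares and raises degrees by exactly two.
Starting from `k = 0` and `k = 1`, this needs only that `c` itself is a sum of squares.
-/

open Polynomial

theorem IsSumSq.exists_fin_sum_sq {R : Type*} [AddCommMonoid R] [Monoid R] {s : R}
    (hs : IsSumSq s) : ∃ (m : ℕ) (q : Fin m → R), s = ∑ j, q j ^ 2 := by
  induction hs with
  | zero => exact ⟨0, ![], by simp⟩
  | sq_add a _ ih =>
    obtain ⟨m, q, rfl⟩ := ih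
    exact ⟨m + 1, Fin.cons a q, by simp [Fin.sum_univ_succ, sq]⟩

theorem IsSumSq.map {R S F : Type*} [NonAssocSemiring R] [NonAssocSemiring S]
    [FunLike F R S] [RingHomClass F R S] (f : F) {s : R} (hs : IsSumSq s) :
    IsSumSq (f s) := by
  induction hs with
  | zero => simp [IsSumSq.zero]
  | sq_add a _ ih => simpa using ih.sq_add (f a)

theorem IsSumSq.pow {R : Type*} [CommSemiring R] {s : R} (hs : IsSumSq s) (n : ℕ) :
    IsSumSq (s ^ n) :=
  Subsemiring.mem_sumSq.1 (pow_mem (Subsemiring.mem_sumSq.2 hs) n)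

theorem Real.isSumSq_of_nonneg {x : ℝ} (hx : 0 ≤ x) : IsSumSq x :=
  (Real.isSquare_iff.2 hx).isSumSq

namespace Polynomial

variable {R : Type*} [CommRing R]

/-- A degree-`k` sum-of-squares derivation of `X ^ k ≥ c ^ k` from `X ≥ c`. -/
structure IsSOSCertificate (c : R) (k : ℕ) (u₀ u₁ : R[X]) : Prop where
  isSumSq_left : IsSumSq u₀
  isSumSq_right : IsSumSq u₁
  natDegree_left_le : u₀.natDegree ≤ k
  natDegree_right_le : (u₁ * (X - C c)).natDegree ≤ k
  eq : X ^ k - C (c ^ k) = u₀ + u₁ * (X - C c)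

theorem isSOSCertificate_zero (c : R) : IsSOSCertificate c 0 0 0 where
  isSumSq_left := .zero
  isSumSq_right := .zero
  natDegree_left_le := by simp
  natDegree_right_le := by simp
  eq := by simp

theorem isSOSCertificate_one (c : R) : IsSOSCertificate c 1 0 1 where
  isSumSq_left := .zero
  isSumSq_right := .one
  natDegree_left_le := by simp
  natDegree_right_le := by simpa using natDegree_X_sub_C_le c
  eq := by simp

theorem IsSOSCertificate.add_two {c : R} {n : ℕ} {u₀ u₁ : R[X]} (hc : IsSumSq c)
    (h : IsSOSCertificate c n u₀ u₁) :
    IsSOSCertificate c (n + 2) (X ^ 2 * u₀ + C (c ^ n) * (X - C c) ^ 2)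
      (X ^ 2 * u₁ + C (2 * c ^ (n + 1))) := by
  have hC : IsSumSq (C c) := hc.map C
  have hXc : (X - C c : R[X]).natDegree ≤ 1 := natDegree_X_sub_C_le c
  have hX2 : IsSumSq (X ^ 2 : R[X]) := (IsSquare.sq X).isSumSq
  refine ⟨?_, ?_, ?_, ?_, ?_⟩
  · rw [C_pow]
    exact (hX2.mul h.isSumSq_left).add ((hC.pow n).mul (IsSquare.sq _).isSumSq)
  · rw [C_mul, C_pow, map_ofNat]
    exact (hX2.mul h.isSumSq_right).add ((IsSumSq.natCast 2).mul (hC.pow _))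
  · refine natDegree_add_le_of_degree_le ?_ ?_
    · simpa [add_comm] using natDegree_mul_le_of_le (natDegree_X_pow_le 2) h.natDegree_left_le
    · exact (natDegree_C_mul_le _ _).trans ((natDegree_pow_le_of_le 2 hXc).trans (by omega))
  · rw [add_mul, mul_assoc]
    refine natDegree_add_le_of_degree_le ?_ ?_
    · simpa [add_comm] using natDegree_mul_le_of_le (natDegree_X_pow_le 2) h.natDegree_right_le
    · exact (natDegree_C_mul_le _ _).trans (hXc.trans (by omega))
  · have e := h.eq
    simp only [map_pow, map_mul, map_ofNat] at e ⊢
    linear_combination X ^ 2 * e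

theorem exists_isSOSCertificate {c : R} (hc : IsSumSq c) (k : ℕ) :
    ∃ u₀ u₁ : R[X], IsSOSCertificate c k u₀ u₁ := by
  induction k using Nat.twoStepInduction with
  | zero => exact ⟨0, 0, isSOSCertificate_zero c⟩
  | one => exact ⟨0, 1, isSOSCertificate_one c⟩
  | more n ih _ =>
    obtain ⟨u₀, u₁, h⟩ := ih
    exact ⟨_, _, h.add_two hc⟩

end Polynomial

theorem stmt_16_general (c : ℝ) (hc : 0 ≤ c) (k : ℕ) :
    ∃ u₀ u₁ : Polynomial ℝ,
      (∃ (m : ℕ) (q : Fin m → Polynomial ℝ), u₀ = ∑ j, (q j)^2) ∧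
      (∃ (m : ℕ) (q : Fin m → Polynomial ℝ), u₁ = ∑ j, (q j)^2) ∧
      u₀.natDegree ≤ k ∧
      (u₁ * (Polynomial.X - Polynomial.C c)).natDegree ≤ k ∧
      (Polynomial.X : Polynomial ℝ)^k - Polynomial.C (c^k)
        = u₀ + u₁ * (Polynomial.X - Polynomial.C c) := by
  obtain ⟨u₀, u₁, h⟩ := exists_isSOSCertificate (Real.isSumSq_of_nonneg hc) k
  exact ⟨u₀, u₁, h.isSumSq_left.exists_fin_sum_sq, h.isSumSq_right.exists_fin_sum_sq,
    h.natDegree_left_le, h.natDegree_right_le, h.eq⟩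

/-- For real `c ≥ 0` and integer `k ≥ 1`, there are SOS polynomials
`u₀, u₁ ∈ ℝ[X]` with `deg u₀ ≤ k`, `deg (u₁ (X − c)) ≤ k`, and
`X^k − c^k = u₀ + u₁ (X − c)`. -/
theorem stmt_16 (c : ℝ) (hc : 0 ≤ c) (k : ℕ) (hk : 1 ≤ k) :
    ∃ u₀ u₁ : Polynomial ℝ,
      (∃ (m : ℕ) (q : Fin m → Polynomial ℝ), u₀ = ∑ j, (q j)^2) ∧
      (∃ (m : ℕ) (q : Fin m → Polynomial ℝ), u₁ = ∑ j, (q j)^2) ∧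
      u₀.natDegree ≤ k ∧
      (u₁ * (Polynomial.X - Polynomial.C c)).natDegree ≤ k ∧
      (Polynomial.X : Polynomial ℝ)^k - Polynomial.C (c^k)
        = u₀ + u₁ * (Polynomial.X - Polynomial.C c) :=
  stmt_16_general c hc k
end

section
/- Let k ≥ 1 be an integer and set ρ* = 1 − 1/(2k). Define P_k(a,b) = (1/4 + ρ*/4)·((1+a)^{2k}(1+b)^{2k} + (1−a)^{2k}(1−b)^{2k}) + (1/4 − ρ*/4)·((1+a)^{2k}(1−b)^{2k} + (1−a)^{2k}(1+b)^{2k}) − 1; define Q_{k,0}(t) = −1 + (1/2 + ρ*/2)·(1+t)^{2k} + (1/2 − ρ*/2)·Σ_{j=0}^{k} C(2k,2j)·(1−t)^{2k−2j}·(−4t)^{j}, and for 1 ≤ i ≤ k define Q_{k,i}(t) = (1/2 + ρ*/2)·C(2k,2i)·(1+t)^{2k−2i} + (1/2 − ρ*/2)·Σ_{j=i}^{k} C(2k,2j)·(1−t)^{2k−2j}·C(j,i)·(−4t)^{j−i}. Then for all real a, b: P_k(a,b) = Σ_{i=0}^{k} Q_{k,i}(ab) · (a+b)^{2i}. -/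
/-!
Write the four products as `(1 + a)(1 ± b) = (1 ± ab) + (a ± b)` and `(1 - a)(1 ± b) = (1 ± ab) - (a ± b)`:
each bracket of `P_k` is then `(x + y)^{2k} + (x - y)^{2k}`, whose binomial expansion keeps only
the even powers of `y`. The powers `(a - b)^{2j}` are re-expanded in `(a + b)^2` through
`(a - b)^2 = (a + b)^2 - 4ab`, and collecting the coefficient of `(a + b)^{2i}` gives `Q_{k,i}(ab)`.
-/

/-- The coefficient polynomials `Q_{k,i}(t)` (with `ρ* = 1 − 1/(2k)`):
`Q_{k,0}(t) = −1 + (1/2 + ρ*/2)(1+t)^{2k}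
            + (1/2 − ρ*/2) Σ_{j=0}^{k} C(2k,2j) (1−t)^{2k−2j} (−4t)^j`, and for `i ≥ 1`
`Q_{k,i}(t) = (1/2 + ρ*/2) C(2k,2i) (1+t)^{2k−2i}
            + (1/2 − ρ*/2) Σ_{j=i}^{k} C(2k,2j) (1−t)^{2k−2j} C(j,i) (−4t)^{j−i}`. -/
noncomputable def Qcoeff (k i : ℕ) (t : ℝ) : ℝ :=
  if i = 0 then
    -1 + (1/2 + (1 - 1/(2*(k:ℝ)))/2) * (1+t)^(2*k)
      + (1/2 - (1 - 1/(2*(k:ℝ)))/2) *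
        ∑ j ∈ Finset.range (k+1),
          ((2*k).choose (2*j) : ℝ) * (1-t)^(2*k-2*j) * (-4*t)^j
  else
    (1/2 + (1 - 1/(2*(k:ℝ)))/2) * ((2*k).choose (2*i) : ℝ) * (1+t)^(2*k-2*i)
      + (1/2 - (1 - 1/(2*(k:ℝ)))/2) *
        ∑ j ∈ Finset.Icc i k,
          ((2*k).choose (2*j) : ℝ) * (1-t)^(2*k-2*j) * (j.choose i : ℝ) * (-4*t)^(j-i)

open Finset

theorem Finset.sum_range_one_add_neg_one_pow_mul {R : Type*} [Ring R] (n : ℕ) (g : ℕ → R) :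
    ∑ m ∈ range (2 * n + 1), (1 + (-1) ^ m) * g m = 2 * ∑ i ∈ range (n + 1), g (2 * i) := by
  induction n with
  | zero => simp [one_add_one_eq_two]
  | succ n ih =>
    rw [show 2 * (n + 1) + 1 = 2 * n + 1 + 1 + 1 by ring, sum_range_succ, sum_range_succ, ih,
      sum_range_succ (fun i => g (2 * i)) (n + 1), show 2 * n + 1 + 1 = 2 * (n + 1) by ring,
      (odd_two_mul_add_one n).neg_one_pow, (even_two_mul (n + 1)).neg_one_pow]
    simp only [add_neg_cancel, zero_mul, add_zero, one_add_one_eq_two, mul_add]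

variable {R : Type*} [CommRing R]

theorem add_pow_two_mul_add_sub_pow_two_mul (x y : R) (k : ℕ) :
    (x + y) ^ (2 * k) + (x - y) ^ (2 * k)
      = 2 * ∑ i ∈ range (k + 1), ((2 * k).choose (2 * i) : R) * x ^ (2 * k - 2 * i) * y ^ (2 * i) := by
  rw [← sum_range_one_add_neg_one_pow_mul k
    (fun m => ((2 * k).choose m : R) * x ^ (2 * k - m) * y ^ m),
    sub_eq_add_neg, add_comm x, add_comm x, add_pow, add_pow, ← sum_add_distrib]
  refine sum_congr rfl fun m _ => ?_
  rw [neg_pow]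
  ring

theorem sub_pow_two_mul_eq_sum (a b : R) (j : ℕ) :
    (a - b) ^ (2 * j)
      = ∑ i ∈ range (j + 1), (j.choose i : R) * (-4 * (a * b)) ^ (j - i) * (a + b) ^ (2 * i) := by
  rw [pow_mul, show (a - b) ^ 2 = (a + b) ^ 2 + -4 * (a * b) by ring, add_pow]
  refine sum_congr rfl fun i _ => ?_
  rw [← pow_mul]
  ring

theorem sum_choose_mul_sub_pow_two_mul (x a b : R) (k : ℕ) :
    ∑ j ∈ range (k + 1), ((2 * k).choose (2 * j) : R) * x ^ (2 * k - 2 * j) * (a - b) ^ (2 * j)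
      = ∑ i ∈ range (k + 1), (∑ j ∈ Icc i k, ((2 * k).choose (2 * j) : R) * x ^ (2 * k - 2 * j)
          * (j.choose i : R) * (-4 * (a * b)) ^ (j - i)) * (a + b) ^ (2 * i) := by
  simp_rw [sub_pow_two_mul_eq_sum, mul_sum, sum_mul]
  rw [sum_comm' (t' := range (k + 1)) (s' := fun i => Icc i k)
    (fun j i => by simp only [mem_range, mem_Icc]; omega)]
  refine sum_congr rfl fun i _ => sum_congr rfl fun j _ => ?_
  ring

theorem two_point_expansion (α β a b : R) (k : ℕ) :
    α * ((1 + a) ^ (2 * k) * (1 + b) ^ (2 * k) + (1 - a) ^ (2 * k) * (1 - b) ^ (2 * k))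
      + β * ((1 + a) ^ (2 * k) * (1 - b) ^ (2 * k) + (1 - a) ^ (2 * k) * (1 + b) ^ (2 * k))
    = ∑ i ∈ range (k + 1), (2 * α * ((2 * k).choose (2 * i) : R) * (1 + a * b) ^ (2 * k - 2 * i)
        + 2 * β * ∑ j ∈ Icc i k, ((2 * k).choose (2 * j) : R) * (1 - a * b) ^ (2 * k - 2 * j)
          * (j.choose i : R) * (-4 * (a * b)) ^ (j - i)) * (a + b) ^ (2 * i) := by
  simp only [← mul_pow]
  rw [show (1 + a) * (1 + b) = (1 + a * b) + (a + b) by ring,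
    show (1 - a) * (1 - b) = (1 + a * b) - (a + b) by ring,
    show (1 + a) * (1 - b) = (1 - a * b) + (a - b) by ring,
    show (1 - a) * (1 + b) = (1 - a * b) - (a - b) by ring,
    add_pow_two_mul_add_sub_pow_two_mul, add_pow_two_mul_add_sub_pow_two_mul,
    sum_choose_mul_sub_pow_two_mul, mul_sum, mul_sum, mul_sum, mul_sum,
    ← sum_add_distrib]
  refine sum_congr rfl fun i _ => ?_
  ring

theorem Qcoeff_eq (k i : ℕ) (t : ℝ) :
    Qcoeff k i t = -(if i = 0 then 1 else 0)
      + (1/2 + (1 - 1/(2*(k:ℝ)))/2) * ((2*k).choose (2*i) : ℝ) * (1+t)^(2*k-2*i)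
      + (1/2 - (1 - 1/(2*(k:ℝ)))/2) *
        ∑ j ∈ Icc i k, ((2*k).choose (2*j) : ℝ) * (1-t)^(2*k-2*j) * (j.choose i : ℝ) * (-4*t)^(j-i) := by
  unfold Qcoeff
  split_ifs with hi
  · subst hi
    simp [Nat.range_succ_eq_Icc_zero]
  · ring

theorem stmt_17_general (k : ℕ) (a b : ℝ) :
    (1/4 + (1 - 1/(2*(k:ℝ)))/4) *
        ((1+a)^(2*k) * (1+b)^(2*k) + (1-a)^(2*k) * (1-b)^(2*k))
      + (1/4 - (1 - 1/(2*(k:ℝ)))/4) *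
        ((1+a)^(2*k) * (1-b)^(2*k) + (1-a)^(2*k) * (1+b)^(2*k))
      - 1
    = ∑ i ∈ Finset.range (k+1), Qcoeff k i (a*b) * (a+b)^(2*i) := by
  have h_shift : ∑ i ∈ range (k+1), Qcoeff k i (a*b) * (a+b)^(2*i)
      = ∑ i ∈ range (k+1), (Qcoeff k i (a*b) + if i = 0 then 1 else 0) * (a+b)^(2*i) - 1 := by
    simp [add_mul, sum_add_distrib]
  rw [h_shift, two_point_expansion]
  congr 1
  refine sum_congr rfl fun i _ => ?_
  rw [Qcoeff_eq]
  ring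

/-- For `k ≥ 1`, `ρ* = 1 − 1/(2k)`, and all real `a, b`:
`P_k(a,b) = Σ_{i=0}^{k} Q_{k,i}(ab) (a+b)^{2i}`. -/
theorem stmt_17 (k : ℕ) (hk : 1 ≤ k) (a b : ℝ) :
    (1/4 + (1 - 1/(2*(k:ℝ)))/4) *
        ((1+a)^(2*k) * (1+b)^(2*k) + (1-a)^(2*k) * (1-b)^(2*k))
      + (1/4 - (1 - 1/(2*(k:ℝ)))/4) *
        ((1+a)^(2*k) * (1-b)^(2*k) + (1-a)^(2*k) * (1+b)^(2*k))
      - 1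
    = ∑ i ∈ Finset.range (k+1), Qcoeff k i (a*b) * (a+b)^(2*i) :=
  stmt_17_general k a b
end
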